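/- The knight's graph K_4 has no Hamiltonian cycle. -/

import Mathlib

/-!
The corners `(0,0)` and `(3,3)` of the `4 × 4` board both have only the two neighbours `(1,2)`
and `(2,1)`. Every vertex lies on exactly two edges of a Hamiltonian cycle, so the cycle uses
all four corner–centre edges; then each of these four squares already has its two cycle
neighbours among the four, and the connected cycle can never reach the other twelve squares.
-/

def knightsGraph (n : ℕ) : SimpleGraph (Fin n × Fin n) where
  Adj a b := (|((a.1 : ℕ) : ℤ) - ((b.1 : ℕ) : ℤ)| = 1 ∧ |((a.2 : ℕ) : ℤ) - ((b.2 : ℕ) : ℤ)| = 2) ∨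
             (|((a.1 : ℕ) : ℤ) - ((b.1 : ℕ) : ℤ)| = 2 ∧ |((a.2 : ℕ) : ℤ) - ((b.2 : ℕ) : ℤ)| = 1)
  symm := by
    refine ⟨fun a b h => ?_⟩
    rw [abs_sub_comm (((b.1 : ℕ) : ℤ)), abs_sub_comm (((b.2 : ℕ) : ℤ))]
    exact h
  loopless := by
    refine ⟨fun a h => ?_⟩
    simp at h

instance knightsGraphDecidable (n : ℕ) : DecidableRel (knightsGraph n).Adj := fun _ _ =>
  inferInstanceAs (Decidable (_ ∨ _))

namespace SimpleGraph.Walk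

variable {V : Type*} {G : SimpleGraph V}

theorem mem_of_mem_support_of_toSubgraph_adj_closed {u v w : V} (p : G.Walk u v) {S : Set V}
    (hu : u ∈ S) (hS : ∀ ⦃x y⦄, x ∈ S → p.toSubgraph.Adj x y → y ∈ S) (hw : w ∈ p.support) :
    w ∈ S := by
  induction p with
  | nil => simp_all
  | cons h q ih =>
    have hq : ∀ ⦃x y⦄, x ∈ S → q.toSubgraph.Adj x y → y ∈ S := fun x y hx hxy =>
      hS hx (Or.inr hxy)
    rcases List.mem_cons.mp hw with rfl | hw
    · exact hu
    · exact ih (hS hu (Or.inl (subgraphOfAdj_adj_self h))) hq hw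

variable {u x a b : V} {p : G.Walk u u}

theorem IsCycle.neighborSet_toSubgraph_eq_of_subset (hp : p.IsCycle) (hx : x ∈ p.support)
    (hab : a ≠ b) (h : p.toSubgraph.neighborSet x ⊆ {a, b}) :
    p.toSubgraph.neighborSet x = {a, b} :=
  Set.eq_of_subset_of_ncard_le h
    (by rw [Set.ncard_pair hab, hp.ncard_neighborSet_toSubgraph_eq_two hx]) (Set.toFinite _)

theorem IsCycle.neighborSet_toSubgraph_eq_of_superset (hp : p.IsCycle) (hx : x ∈ p.support)
    (hab : a ≠ b) (h : {a, b} ⊆ p.toSubgraph.neighborSet x) :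
    p.toSubgraph.neighborSet x = {a, b} := by
  have htwo := hp.ncard_neighborSet_toSubgraph_eq_two hx
  refine (Set.eq_of_subset_of_ncard_le h ?_ (Set.finite_of_ncard_ne_zero (by omega))).symm
  rw [Set.ncard_pair hab, htwo]

theorem IsHamiltonianCycle.eq_univ_of_neighborSet_subset_pair [DecidableEq V]
    (hp : p.IsHamiltonianCycle) {c d : V} (hab : a ≠ b) (hcd : c ≠ d)
    (ha : G.neighborSet a ⊆ {c, d}) (hb : G.neighborSet b ⊆ {c, d}) :
    ({a, b, c, d} : Set V) = Set.univ := by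
  set H := p.toSubgraph
  have hcorner : ∀ x ∈ ({a, b} : Set V), H.neighborSet x = {c, d} := by
    rintro x (rfl | rfl)
    · exact hp.isCycle.neighborSet_toSubgraph_eq_of_subset (hp.mem_support _) hcd
        ((H.neighborSet_subset _).trans ha)
    · exact hp.isCycle.neighborSet_toSubgraph_eq_of_subset (hp.mem_support _) hcd
        ((H.neighborSet_subset _).trans hb)
  have hcentre : ∀ y ∈ ({c, d} : Set V), H.neighborSet y = {a, b} := fun y hy =>
    hp.isCycle.neighborSet_toSubgraph_eq_of_superset (hp.mem_support _) hab
      fun x hx => H.adj_symm (((hcorner x hx).symm ▸ hy : y ∈ H.neighborSet x))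
  have hclosed : ∀ ⦃x y⦄, x ∈ ({a, b, c, d} : Set V) →
      (p.rotate a (hp.mem_support a)).toSubgraph.Adj x y → y ∈ ({a, b, c, d} : Set V) := by
    intro x y hx hxy
    rw [toSubgraph_rotate] at hxy
    change y ∈ H.neighborSet x at hxy
    obtain hx | hx : x ∈ ({a, b} : Set V) ∨ x ∈ ({c, d} : Set V) := by
      simpa only [Set.mem_insert_iff, Set.mem_singleton_iff, or_assoc] using hx
    · rw [hcorner x hx] at hxy
      rcases hxy with rfl | rfl <;> simp
    · rw [hcentre x hx] at hxy
      rcases hxy with rfl | rfl <;> simp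
  exact Set.eq_univ_of_forall fun w =>
    mem_of_mem_support_of_toSubgraph_adj_closed _ (by simp) hclosed
      ((mem_support_rotate_iff _ _ _).2 (hp.mem_support w))

end SimpleGraph.Walk

theorem knightsGraph_four_neighborSet_corner {x : Fin 4 × Fin 4} (hx : x = (0, 0) ∨ x = (3, 3)) :
    (knightsGraph 4).neighborSet x ⊆ {(1, 2), (2, 1)} := by
  intro y
  simp only [SimpleGraph.mem_neighborSet, Set.mem_insert_iff, Set.mem_singleton_iff]
  revert y
  rcases hx with rfl | rfl <;> decide

theorem four_board_no_closed_tour (v : Fin 4 × Fin 4) (p : (knightsGraph 4).Walk v v) :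
    ¬ p.IsHamiltonianCycle := by
  intro hp
  have hcover := hp.eq_univ_of_neighborSet_subset_pair (a := (0, 0)) (b := (3, 3))
    (by decide) (by decide) (knightsGraph_four_neighborSet_corner (.inl rfl))
    (knightsGraph_four_neighborSet_corner (.inr rfl))
  have hmiss : ((0, 1) : Fin 4 × Fin 4) ∉ ({(0, 0), (3, 3), (1, 2), (2, 1)} : Set _) := by
    simp only [Set.mem_insert_iff, Set.mem_singleton_iff]
    decide
  exact hmiss (hcover ▸ Set.mem_univ _)
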